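/- Let γ ∈ (0,1), ω > 0, let i be an integer, and let g : ℝ → ℝ be a C² function. Then |∫_{2πi/ω}^{2π(i+1)/ω} cos(ωx) g(x) dx| ≤ (π/ω)³ · sup_{x ∈ [2πi/ω, 2π(i+1)/ω]} |g″(x)|. -/

import Mathlib

noncomputable section

open Real MeasureTheory Filter Metric
open scoped ENNReal NNReal Topology

/-- The plane `ℝ²` with the Euclidean metric. -/
abbrev E2 : Type := EuclideanSpace ℝ (Fin 2)

/-- The point of `ℝ²` with cartesian coordinates `(a, b)`. -/
def pt (a b : ℝ) : E2 := WithLp.toLp 2 ![a, b]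

/-- The angular coordinate of a point of the plane. -/
def ang (x : E2) : ℝ := Complex.arg (x 0 + x 1 * Complex.I)

/-- Partial derivative in the `x₁` direction. -/
def pdx (f : E2 → ℝ) : E2 → ℝ := fun x => fderiv ℝ f x (pt 1 0)

/-- Partial derivative in the `x₂` direction. -/
def pdy (f : E2 → ℝ) : E2 → ℝ := fun x => fderiv ℝ f x (pt 0 1)

/-- Mixed partial derivative `∂^{a+b} f / ∂x₁^a ∂x₂^b`. -/
def pdMix (a b : ℕ) (f : E2 → ℝ) : E2 → ℝ := pdx^[a] (pdy^[b] f)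

/-- Directional derivative in direction `u`. -/
def dirD (u : E2) (f : E2 → ℝ) : E2 → ℝ := fun x => fderiv ℝ f x u

/-- The `C^m` norm of a function on the plane: sum of sup norms of all partial
derivatives of order at most `m` (valued in `ℝ≥0∞`). -/
def cknorm (m : ℕ) (f : E2 → ℝ) : ℝ≥0∞ :=
  ∑ i ∈ Finset.range (m+1), ∑ j ∈ Finset.range (i+1),
    ⨆ x : E2, ENNReal.ofReal |pdMix j (i-j) f x|

/-- The `β`-Hölder seminorm of the `k`-th derivatives of `f`. -/
def holderSemi (k : ℕ) (β : ℝ) (f : E2 → ℝ) : ℝ≥0∞ :=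
  ∑ j ∈ Finset.range (k+1),
    ⨆ (x : E2) (y : E2) (_ : x ≠ y),
      ENNReal.ofReal (|pdMix j (k-j) f x - pdMix j (k-j) f y| / dist x y ^ β)

/-- The `C^{k,β}` Hölder norm. -/
def holderNorm (k : ℕ) (β : ℝ) (f : E2 → ℝ) : ℝ≥0∞ := cknorm k f + holderSemi k β f

/-- `C^m` norm restricted to a set `A` (with essential suprema). -/
def cknormOn (m : ℕ) (A : Set E2) (f : E2 → ℝ) : ℝ≥0∞ :=
  ∑ i ∈ Finset.range (m+1), ∑ j ∈ Finset.range (i+1),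
    essSup (fun x => ENNReal.ofReal |pdMix j (i-j) f x|) (volume.restrict A)

/-- `H^m`-type norm restricted to a set `A`: sum of the `L²(A)` norms of the
partial derivatives of order at most `m`. -/
def l2On (m : ℕ) (A : Set E2) (f : E2 → ℝ) : ℝ≥0∞ :=
  ∑ i ∈ Finset.range (m+1), ∑ j ∈ Finset.range (i+1),
    (∫⁻ x in A, (ENNReal.ofReal |pdMix j (i-j) f x|) ^ 2) ^ (1/2 : ℝ)

/-- The Fourier transform of a function on the plane. -/
def FT2 (f : E2 → ℂ) (ξ : E2) : ℂ :=
  ∫ x : E2, Complex.exp (-(2 * π * (inner ℝ x ξ : ℝ)) * Complex.I) * f x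

/-- The (inhomogeneous) Sobolev norm `‖f‖_{H^s}² = ∫ (1+|ξ|²)^s |f̂(ξ)|² dξ`. -/
def sobNorm (s : ℝ) (f : E2 → ℝ) : ℝ≥0∞ :=
  (∫⁻ ξ : E2, ENNReal.ofReal ((1 + ‖ξ‖^2) ^ s) *
      (‖FT2 (fun x => (f x : ℂ)) ξ‖₊ : ℝ≥0∞) ^ 2) ^ (1/2 : ℝ)

/-- First component of the `γ`-SQG velocity,
`v_{1,γ}(w)(x) = P.V.∫ (y₂−x₂) w(y)/|x−y|^{3+γ} dy`. -/
def v1G (γ : ℝ) (w : E2 → ℝ) (x : E2) : ℝ :=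
  limUnder (𝓝[>] (0:ℝ)) fun ε =>
    ∫ y in {y : E2 | ε ≤ dist x y}, (y 1 - x 1) * w y / dist x y ^ (3+γ)

/-- Second component of the `γ`-SQG velocity,
`v_{2,γ}(w)(x) = P.V.∫ (x₁−y₁) w(y)/|x−y|^{3+γ} dy`. -/
def v2G (γ : ℝ) (w : E2 → ℝ) (x : E2) : ℝ :=
  limUnder (𝓝[>] (0:ℝ)) fun ε =>
    ∫ y in {y : E2 | ε ≤ dist x y}, (x 0 - y 0) * w y / dist x y ^ (3+γ)

/-- The `γ`-SQG velocity `v_γ(w)(x) = P.V.∫ (x−y)^⊥ w(y)/|x−y|^{3+γ} dy`. -/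
def vG (γ : ℝ) (w : E2 → ℝ) (x : E2) : E2 := pt (v1G γ w x) (v2G γ w x)

/-- Radial component of the velocity. -/
def vr (γ : ℝ) (w : E2 → ℝ) (x : E2) : ℝ :=
  Real.cos (ang x) * v1G γ w x + Real.sin (ang x) * v2G γ w x

/-- Angular component of the velocity. -/
def va (γ : ℝ) (w : E2 → ℝ) (x : E2) : ℝ :=
  Real.cos (ang x) * v2G γ w x - Real.sin (ang x) * v1G γ w x

/-- `w` is a (pointwise classical) solution of the `γ`-SQG equation
`∂_t w + v_γ(w)·∇w = 0` on the time interval `[0,T]`. -/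
def IsSQGSol (γ T : ℝ) (w : ℝ → E2 → ℝ) : Prop :=
  ∀ t ∈ Set.Icc (0:ℝ) T, ∀ x : E2,
    HasDerivAt (fun τ => w τ x)
      (-(inner ℝ (vG γ (w t) x) (gradient (w t) x) : ℝ)) t

/-- `w` is a solution of `∂_t w + (v_γ(w)+ve)·∇w = 0` on `[0,T]`. -/
def IsPertSQGSol (γ T : ℝ) (ve : E2 → E2) (w : ℝ → E2 → ℝ) : Prop :=
  ∀ t ∈ Set.Icc (0:ℝ) T, ∀ x : E2,
    HasDerivAt (fun τ => w τ x)
      (-(inner ℝ (vG γ (w t) x + ve x) (gradient (w t) x) : ℝ)) t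

/-- Polar-coordinates representation `f^pol(r,α) = f(r cos α, r sin α)`. -/
def wP (w : E2 → ℝ) (r α : ℝ) : ℝ := w (pt (r * Real.cos α) (r * Real.sin α))

/-- Partial derivative in the first (radial) variable of a two-variable function. -/
def pdR (F : ℝ → ℝ → ℝ) : ℝ → ℝ → ℝ := fun r α => deriv (fun s => F s α) r

/-- Partial derivative in the second (angular) variable of a two-variable function. -/
def pdA (F : ℝ → ℝ → ℝ) : ℝ → ℝ → ℝ := fun r α => deriv (fun s => F r s) α

/-- Mixed partial derivatives of a two-variable function. -/
def pdPol (a b : ℕ) (F : ℝ → ℝ → ℝ) : ℝ → ℝ → ℝ := pdR^[a] (pdA^[b] F)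

/-- `C^m` norm of a function of two real variables. -/
def c2norm (m : ℕ) (F : ℝ → ℝ → ℝ) : ℝ≥0∞ :=
  ∑ i ∈ Finset.range (m+1), ∑ j ∈ Finset.range (i+1),
    ⨆ p : ℝ × ℝ, ENNReal.ofReal |pdPol j (i-j) F p.1 p.2|

/-- The set `B^pol_ρ(r,α) − (r,α)`: pairs `(h,α′)` such that `(r+h, α+α′)`
lies in the polar ball of radius `ρ` around `(r,α)`. -/
def polarShift (ρ r α : ℝ) : Set (ℝ × ℝ) :=
  {p : ℝ × ℝ |
    dist (pt ((r + p.1) * Real.cos (α + p.2)) ((r + p.1) * Real.sin (α + p.2)))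
      (pt (r * Real.cos α) (r * Real.sin α)) ≤ ρ}

/-- The radial extension of `f1 : ℝ → ℝ` to the plane. -/
def radial (f1 : ℝ → ℝ) : E2 → ℝ := fun x => f1 ‖x‖

/-- The constant `C_γ = −K_γ · 2∫₀^∞ sin h / h^{1+γ} dh < 0`,
with `K_γ = ∫_ℝ (1+λ²)^{−(3+γ)/2} dλ`. -/
def Cgam (γ : ℝ) : ℝ :=
  -((∫ l : ℝ, (1 + l^2) ^ (-(3+γ)/2)) * (2 * ∫ h in Set.Ioi (0:ℝ), Real.sin h / h ^ (1+γ)))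

/-- The angular velocity `V = v_{α,γ}(f₁)(r=1)` generated by the radial profile `f₁`. -/
def Vang (γ : ℝ) (f1 : ℝ → ℝ) : ℝ := va γ (radial f1) (pt 1 0)

/-- `λ₀ = π M^{1−γ} / (2 t̃ N^γ C_γ γ)`. -/
def lam0 (γ tt N : ℝ) (M : ℕ) : ℝ := π * (M:ℝ) ^ (1-γ) / (2 * tt * N ^ γ * Cgam γ * γ)

/-- `M_j = M (1 + j/J)`. -/
def Mjj (M J j : ℕ) : ℝ := (M:ℝ) * (1 + (j:ℝ)/(J:ℝ))

/-- `λ_j = λ (1 + j/J)^β`. -/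
def lamjj (lam β : ℝ) (J j : ℕ) : ℝ := lam * (1 + (j:ℝ)/(J:ℝ)) ^ β

/-- `α¹_j = (π/(2N))(1+j/J)^{−1+γ} − t̃ λ₀ V`. -/
def a1jj (γ tt N : ℝ) (M J : ℕ) (f1 : ℝ → ℝ) (j : ℕ) : ℝ :=
  (π/(2*N)) * (1 + (j:ℝ)/(J:ℝ)) ^ (-1+γ) - tt * lam0 γ tt N M * Vang γ f1

/-- `α²_j = −(1/γ−1)(π/2) M (1+j/J)^γ`. -/
def a2jj (γ : ℝ) (M J j : ℕ) : ℝ :=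
  -((1/γ - 1) * (π/2) * (M:ℝ) * (1 + (j:ℝ)/(J:ℝ)) ^ γ)

/-- The pseudo-solution `w̄_{λ,N,M,J,L,t̃}` in polar coordinates. -/
def wbarPol (k : ℕ) (β γ δ lam N tt : ℝ) (M J L : ℕ) (f1 g : ℝ → ℝ) (t r α : ℝ) : ℝ :=
  lam0 γ tt N M * f1 r +
    ∑ j ∈ Finset.Icc 1 J, ∑ l ∈ Finset.range L,
      lamjj lam β J j *
        g (N ^ (1-δ) * (r - 1)) * g (N ^ (1-δ) * (α - t * lam0 γ tt N M * Vang γ f1)) *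
        Real.cos (N * (Mjj M J j + l) *
            (α - a1jj γ tt N M J f1 j - t * lam0 γ tt N M * Vang γ f1)
          + a2jj γ M J j + k * π / 2
          + t * lam0 γ tt N M * Cgam γ * N ^ γ * (Mjj M J j + l) ^ γ)
        / ((J:ℝ) * (L:ℝ) * (N * Mjj M J j) ^ ((k:ℝ) + β))

/-- The pseudo-solution `w̄_{λ,N,M,J,L,t̃}` as a function on the plane. -/
def wbar (k : ℕ) (β γ δ lam N tt : ℝ) (M J L : ℕ) (f1 g : ℝ → ℝ) (t : ℝ) : E2 → ℝ :=
  fun x => wbarPol k β γ δ lam N tt M J L f1 g t ‖x‖ (ang x)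

/-- The residual `F = −(∂_t w̄ + v_γ(w̄)·∇w̄)` of the pseudo-solution. -/
def sqgResidual (k : ℕ) (β γ δ lam N tt : ℝ) (M J L : ℕ) (f1 g : ℝ → ℝ)
    (t : ℝ) (x : E2) : ℝ :=
  -(deriv (fun τ => wbar k β γ δ lam N tt M J L f1 g τ x) t
    + (inner ℝ (vG γ (wbar k β γ δ lam N tt M J L f1 g t) x)
        (gradient (wbar k β γ δ lam N tt M J L f1 g t) x) : ℝ))

/-- Hypotheses on the bump profile `g` defining `f₂(r−1,α) = g(r−1)g(α)`. -/
def BumpHyp (g : ℝ → ℝ) : Prop :=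
  ContDiff ℝ (⊤ : ℕ∞) g ∧ (∀ x, 0 ≤ g x) ∧ tsupport g ⊆ Set.Icc (-(1/2) : ℝ) (1/2) ∧
    (∀ x ∈ Set.Icc (-(1/4) : ℝ) (1/4), g x = 1) ∧
    (∀ m : ℕ, c2norm m (fun u v => g u * g v) ≤ ENNReal.ofReal (100 ^ m))

/-- Hypotheses on the radial profile `f₁`. -/
def F1Hyp (γ : ℝ) (f1 : ℝ → ℝ) : Prop :=
  ContDiff ℝ (⊤ : ℕ∞) f1 ∧ (∀ r ∈ Set.Icc (3/4 : ℝ) (5/4), deriv f1 r = 1) ∧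
    (∃ Kγ : ℝ, tsupport f1 ⊆ Set.Ioo (1/2) Kγ) ∧
    iteratedDeriv 1 (fun r => va γ (radial f1) (pt r 0) / r) 1 = 0 ∧
    iteratedDeriv 2 (fun r => va γ (radial f1) (pt r 0) / r) 1 = 0

/-- Divergence-free condition for a velocity field on the plane. -/
def DivFree (ve : E2 → E2) : Prop :=
  ∀ x, pdx (fun y => ve y 0) x + pdy (fun y => ve y 1) x = 0

/-- `C^m` norm of a vector field on the plane. -/
def cknormV (m : ℕ) (ve : E2 → E2) : ℝ≥0∞ :=
  cknorm m (fun y => ve y 0) + cknorm m (fun y => ve y 1)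

lemma four_pi_le_pi_cubed : 4*π ≤ π^3 := by
  have h2 : 9 ≤ π^2 := by nlinarith [Real.pi_gt_three]
  nlinarith [h2, Real.pi_pos, mul_le_mul_of_nonneg_right h2 Real.pi_pos.le]

/-- **Oscillatory integral bound over one period.** For `ω > 0`, an integer `i`
and a `C²` function `g`,
`|∫_{2πi/ω}^{2π(i+1)/ω} cos(ωx) g(x) dx| ≤ (π/ω)³ sup_{[2πi/ω, 2π(i+1)/ω]} |g″|`. -/
theorem oscillatory_period_bound
    (γ ω : ℝ) (hγ : γ ∈ Set.Ioo (0:ℝ) 1) (hω : 0 < ω) (i : ℤ)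
    (g : ℝ → ℝ) (hg : ContDiff ℝ 2 g) :
    |∫ x in (2*π*(i:ℝ)/ω)..(2*π*((i:ℝ)+1)/ω), Real.cos (ω*x) * g x| ≤
      (π/ω) ^ 3 *
        sSup ((fun x => |iteratedDeriv 2 g x|) ''
          Set.Icc (2*π*(i:ℝ)/ω) (2*π*((i:ℝ)+1)/ω)) := by
  have hω' : ω ≠ 0 := ne_of_gt hω
  set a : ℝ := 2*π*(i:ℝ)/ω with ha
  set b : ℝ := 2*π*((i:ℝ)+1)/ω with hb
  have hba : b - a = 2*π/ω := by rw [ha, hb]; field_simp; ring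
  have hab : a ≤ b := by
    have h0 : 0 ≤ b - a := by rw [hba]; positivity
    linarith
  -- regularity facts
  have hg2 : ContDiff ℝ ((1:ℕ∞) + 1) g := by exact_mod_cast hg
  have hg' : ContDiff ℝ (1:ℕ∞) (deriv g) := (contDiff_succ_iff_deriv.mp hg2).2.2
  have hdg : Differentiable ℝ g := hg.differentiable (by norm_num)
  have hdg' : Differentiable ℝ (deriv g) := hg'.differentiable (by norm_num)
  have hcont2 : Continuous (deriv (deriv g)) := hg'.continuous_deriv le_rfl
  have hit : iteratedDeriv 2 g = deriv (deriv g) := by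
    rw [iteratedDeriv_succ, iteratedDeriv_one]
  have hcosω : Continuous fun x : ℝ => Real.cos (ω*x) :=
    Real.continuous_cos.comp (continuous_const.mul continuous_id)
  -- key derivative
  set F : ℝ → ℝ := fun y => Real.sin (ω*y)/ω * g y + Real.cos (ω*y)/ω^2 * deriv g y with hF
  have hFd : ∀ x : ℝ, HasDerivAt F
      (Real.cos (ω*x) * g x + Real.cos (ω*x)/ω^2 * deriv (deriv g) x) x := by
    intro x
    have hx : HasDerivAt (fun y : ℝ => ω * y) ω x := by
      simpa using (hasDerivAt_id x).const_mul ω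
    have hsin := (Real.hasDerivAt_sin (ω*x)).comp x hx
    have hcos := (Real.hasDerivAt_cos (ω*x)).comp x hx
    have h1 := (hsin.div_const ω).mul (hdg x).hasDerivAt
    have h2 := (hcos.div_const (ω^2)).mul (hdg' x).hasDerivAt
    refine HasDerivAt.congr_deriv (h1.add h2) ?_
    simp only [Function.comp_apply]
    field_simp
    ring
  -- integrability
  have hint1 : IntervalIntegrable (fun x => Real.cos (ω*x) * g x) MeasureTheory.volume a b :=
    (hcosω.mul hg.continuous).intervalIntegrable a b
  have hint2 : IntervalIntegrable (fun x => Real.cos (ω*x)/ω^2 * deriv (deriv g) x)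
      MeasureTheory.volume a b :=
    (((hcosω.div_const _)).mul hcont2).intervalIntegrable a b
  have hint3 : IntervalIntegrable (deriv (deriv g)) MeasureTheory.volume a b :=
    hcont2.intervalIntegrable a b
  have key : (∫ x in a..b, (Real.cos (ω*x) * g x + Real.cos (ω*x)/ω^2 * deriv (deriv g) x))
      = F b - F a :=
    intervalIntegral.integral_eq_sub_of_hasDerivAt (fun x _ => hFd x) (hint1.add hint2)
  have key2 : (∫ x in a..b, deriv (deriv g) x) = deriv g b - deriv g a :=
    intervalIntegral.integral_eq_sub_of_hasDerivAt (fun x _ => (hdg' x).hasDerivAt) hint3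
  -- endpoint values
  have hωa : ω * a = (i:ℝ) * (2*π) := by rw [ha]; field_simp
  have hωb : ω * b = ((i:ℝ)+1) * (2*π) := by rw [hb]; field_simp
  have hωb' : ω * b = ((i+1 : ℤ):ℝ) * (2*π) := by rw [hωb]; push_cast; ring
  have hsina : Real.sin (ω*a) = 0 := by
    have e : ((i:ℝ))*(2*π) = ((2*i : ℤ):ℝ)*π := by push_cast; ring
    rw [hωa, e, Real.sin_int_mul_pi]
  have hsinb : Real.sin (ω*b) = 0 := by
    have e : (((i+1:ℤ)):ℝ)*(2*π) = ((2*(i+1) : ℤ):ℝ)*π := by push_cast; ring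
    rw [hωb', e, Real.sin_int_mul_pi]
  have hcosa : Real.cos (ω*a) = 1 := by rw [hωa]; exact Real.cos_int_mul_two_pi i
  have hcosb : Real.cos (ω*b) = 1 := by rw [hωb']; exact Real.cos_int_mul_two_pi (i+1)
  have hFba : F b - F a = (1/ω^2) * ∫ x in a..b, deriv (deriv g) x := by
    rw [key2, hF]; simp only [hsina, hsinb, hcosa, hcosb]; ring
  -- the identity
  have hiden : (∫ x in a..b, Real.cos (ω*x) * g x)
      = (1/ω^2) * ∫ x in a..b, (1 - Real.cos (ω*x)) * deriv (deriv g) x := by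
    have hs : (∫ x in a..b, (1 - Real.cos (ω*x)) * deriv (deriv g) x)
        = (∫ x in a..b, deriv (deriv g) x)
          - ∫ x in a..b, Real.cos (ω*x) * deriv (deriv g) x := by
      rw [← intervalIntegral.integral_sub (g := fun x => Real.cos (ω*x) * deriv (deriv g) x) hint3
        ((hcosω.mul hcont2).intervalIntegrable a b)]
      apply intervalIntegral.integral_congr
      intro x _; ring
    have hadd := intervalIntegral.integral_add hint1 hint2
    have h2 : (∫ x in a..b, Real.cos (ω*x)/ω^2 * deriv (deriv g) x)
        = (1/ω^2) * ∫ x in a..b, Real.cos (ω*x) * deriv (deriv g) x := by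
      rw [← intervalIntegral.integral_const_mul]
      apply intervalIntegral.integral_congr
      intro x _; ring
    rw [hs]
    have := key
    rw [hadd, hFba, h2] at this
    linarith
  -- sup bound
  set M : ℝ := sSup ((fun x => |iteratedDeriv 2 g x|) '' Set.Icc a b) with hM
  have hMnn : 0 ≤ M := Real.sSup_nonneg (by rintro y ⟨x, _, rfl⟩; exact abs_nonneg _)
  have hbdd : BddAbove ((fun x => |iteratedDeriv 2 g x|) '' Set.Icc a b) := by
    apply IsCompact.bddAbove_image isCompact_Icc
    exact (hit ▸ hcont2.abs).continuousOn
  have hle : ∀ x ∈ Set.Icc a b, |deriv (deriv g) x| ≤ M := by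
    intro x hx
    rw [← hit]
    exact le_csSup hbdd ⟨x, hx, rfl⟩
  have hba' : |b - a| = 2*π/ω := by rw [abs_of_nonneg (sub_nonneg.mpr hab), hba]
  have hbound : |∫ x in a..b, (1 - Real.cos (ω*x)) * deriv (deriv g) x| ≤ 2*M * |b - a| := by
    have := intervalIntegral.norm_integral_le_of_norm_le_const
      (C := 2*M) (f := fun x => (1 - Real.cos (ω*x)) * deriv (deriv g) x)
      (a := a) (b := b) ?_
    · rwa [Real.norm_eq_abs] at this
    · intro x hx
      rw [Set.uIoc_of_le hab] at hx
      have hx' : x ∈ Set.Icc a b := ⟨le_of_lt hx.1, hx.2⟩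
      rw [Real.norm_eq_abs, abs_mul]
      have h1 : |1 - Real.cos (ω*x)| ≤ 2 := by
        have := Real.neg_one_le_cos (ω*x); have := Real.cos_le_one (ω*x)
        rw [abs_le]; constructor <;> linarith
      exact mul_le_mul h1 (hle x hx') (abs_nonneg _) (by norm_num)
  -- conclude
  rw [hiden, abs_mul, abs_of_nonneg (by positivity : (0:ℝ) ≤ 1/ω^2)]
  have hπ := Real.pi_gt_three
  have hgoal : 1/ω^2 * (2*M * |b-a|) ≤ (π/ω)^3 * M := by
    have e1 : 1/ω^2 * (2*M*(2*π/ω)) = 4*π*M/ω^3 := by field_simp; ring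
    have e2 : (π/ω)^3 * M = π^3*M/ω^3 := by rw [div_pow]; ring
    rw [hba', e1, e2]
    gcongr
    exact four_pi_le_pi_cubed
  calc 1/ω^2 * |∫ x in a..b, (1 - Real.cos (ω*x)) * deriv (deriv g) x|
      ≤ 1/ω^2 * (2*M * |b-a|) := by
        apply mul_le_mul_of_nonneg_left hbound (by positivity)
    _ ≤ (π/ω)^3 * M := hgoal
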